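/- arXiv:1601.01054 — 2 statements merged into one kernel-verified Lean document; each statement's English description precedes it below -/
import Mathlib

section
/- For a merge node with 2 input links and 1 output link, with demands S1, S2 ≥ 0, supply R ≥ 0, and positive priorities p1, p2, the flows f1 = min{S1, max{(p1/(p1+p2))·R, R − S2}} and f2 = min{S2, max{(p2/(p1+p2))·R, R − S1}} satisfy the supply constraint f1 + f2 ≤ R. -/
/-! If one flow is capped by the residual term `R - S2` (resp. `R - S1`), it leaves room exactly
for the other link's full demand, which caps the other flow. Otherwise both flows are capped by
their proportional shares of `R`, and these shares add up to `R`. -/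

theorem min_max_add_min_max_le_of_add_eq {α : Type*} [AddCommGroup α] [LinearOrder α]
    [IsOrderedAddMonoid α] {S₁ S₂ a₁ a₂ R : α} (hR : a₁ + a₂ = R) :
    min S₁ (max a₁ (R - S₂)) + min S₂ (max a₂ (R - S₁)) ≤ R := by
  rcases max_choice a₁ (R - S₂) with h₁ | h₁ <;> rw [h₁]
  · rcases max_choice a₂ (R - S₁) with h₂ | h₂ <;> rw [h₂]
    · calc min S₁ a₁ + min S₂ a₂ ≤ a₁ + a₂ := add_le_add (min_le_right _ _) (min_le_right _ _)
        _ = R := hR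
    · calc min S₁ a₁ + min S₂ (R - S₁) ≤ S₁ + (R - S₁) :=
            add_le_add (min_le_left _ _) (min_le_right _ _)
        _ = R := add_sub_cancel S₁ R
  · calc min S₁ (R - S₂) + min S₂ (max a₂ (R - S₁)) ≤ (R - S₂) + S₂ :=
          add_le_add (min_le_right _ _) (min_le_left _ _)
      _ = R := sub_add_cancel R S₂

theorem div_mul_add_div_mul_eq_self {K : Type*} [DivisionRing K] {p₁ p₂ : K} (hp : p₁ + p₂ ≠ 0)
    (R : K) : p₁ / (p₁ + p₂) * R + p₂ / (p₁ + p₂) * R = R := by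
  rw [← add_mul, ← add_div, div_self hp, one_mul]

theorem merge_flows_supply_constraint_general
    (S1 S2 R p1 p2 : ℝ)
    (hp1 : 0 < p1) (hp2 : 0 < p2) :
    min S1 (max (p1 / (p1 + p2) * R) (R - S2)) +
      min S2 (max (p2 / (p1 + p2) * R) (R - S1)) ≤ R :=
  min_max_add_min_max_le_of_add_eq (div_mul_add_div_mul_eq_self (by positivity) R)

/-- 2-to-1 merge node flows satisfy the supply constraint. -/
theorem merge_flows_supply_constraint
    (S1 S2 R p1 p2 : ℝ)
    (hS1 : 0 ≤ S1) (hS2 : 0 ≤ S2) (hR : 0 ≤ R)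
    (hp1 : 0 < p1) (hp2 : 0 < p2) :
    min S1 (max (p1 / (p1 + p2) * R) (R - S2)) +
      min S2 (max (p2 / (p1 + p2) * R) (R - S1)) ≤ R :=
  merge_flows_supply_constraint_general S1 S2 R p1 p2 hp1 hp2
end

section
/- The 2-input merge flow formula is invariant: if the flow from input link 1 is supply-constrained, i.e., f1 = max{(p1/(p1+p2))R, R − S2} < S1, then replacing the demand S1 by any value S1' ≥ f1 (in particular the link capacity F1 ≥ S1) leaves both computed flows f1 and f2 unchanged, provided f2 is also supply-constrained (f2 < S2). -/
/-! The priority shares `p₁/(p₁+p₂)·R` and `p₂/(p₁+p₂)·R` add up to `R`. Hence any demand `T`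
at least the first share gives `R − T` at most the second share, so `f₂` equals the second
share for both `S₁` and `S₁'`; and `f₁` is the common second argument of both minima. -/

theorem div_add_mul_add_div_add_mul {p q : ℝ} (hpq : p + q ≠ 0) (R : ℝ) :
    p / (p + q) * R + q / (p + q) * R = R := by
  rw [← add_mul, ← add_div, div_self hpq, one_mul]

theorem max_sub_eq_left_of_add_eq {a b R T : ℝ} (hab : a + b = R) (haT : a ≤ T) :
    max b (R - T) = b :=
  max_eq_left (by linarith)

theorem merge_flows_invariance_general
    (S1 S2 R p1 p2 : ℝ)
    (hp1 : 0 < p1) (hp2 : 0 < p2)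
    (hf1 : max (p1 / (p1 + p2) * R) (R - S2) < S1)
    (S1' : ℝ) (hS1' : max (p1 / (p1 + p2) * R) (R - S2) ≤ S1') :
    min S1' (max (p1 / (p1 + p2) * R) (R - S2)) =
        min S1 (max (p1 / (p1 + p2) * R) (R - S2)) ∧
      min S2 (max (p2 / (p1 + p2) * R) (R - S1')) =
        min S2 (max (p2 / (p1 + p2) * R) (R - S1)) := by
  have hshares := div_add_mul_add_div_add_mul (add_pos hp1 hp2).ne' R
  refine ⟨by rw [min_eq_right hS1', min_eq_right hf1.le], ?_⟩
  rw [max_sub_eq_left_of_add_eq hshares ((le_max_left _ _).trans hS1'),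
    max_sub_eq_left_of_add_eq hshares ((le_max_left _ _).trans hf1.le)]

/-- invariance of the 2-input merge flow formula. If the flow from
input 1 is supply-constrained (f1 = max{(p1/(p1+p2))R, R−S2} < S1) and the flow
from input 2 is also supply-constrained (f2 = max{(p2/(p1+p2))R, R−S1} < S2),
then replacing S1 by any S1' ≥ f1 leaves both computed flows unchanged. -/
theorem merge_flows_invariance
    (S1 S2 R p1 p2 : ℝ)
    (hS1 : 0 ≤ S1) (hS2 : 0 ≤ S2) (hR : 0 ≤ R)
    (hp1 : 0 < p1) (hp2 : 0 < p2)
    (hf1 : max (p1 / (p1 + p2) * R) (R - S2) < S1)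
    (hf2 : max (p2 / (p1 + p2) * R) (R - S1) < S2)
    (S1' : ℝ) (hS1' : max (p1 / (p1 + p2) * R) (R - S2) ≤ S1') :
    min S1' (max (p1 / (p1 + p2) * R) (R - S2)) =
        min S1 (max (p1 / (p1 + p2) * R) (R - S2)) ∧
      min S2 (max (p2 / (p1 + p2) * R) (R - S1')) =
        min S2 (max (p2 / (p1 + p2) * R) (R - S1)) :=
  merge_flows_invariance_general S1 S2 R p1 p2 hp1 hp2 hf1 S1' hS1'
end
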